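/- Let D = {(u, w) ∈ ℝ^p × ℝ^p : u ≤ 0, w ≤ 0, u_i w_i = 0 ∀i}. The Euclidean projection of a point (a, b) ∈ ℝ^p × ℝ^p onto D is given coordinatewise by: if min(a_i, 0)² ≥ min(b_i, 0)² then (min(a_i,0), 0), else (0, min(b_i,0)); this point achieves the minimum distance to D. -/

import Mathlib

/-
Since `D` is a product of copies of the "cross" `{(u, w) : u ≤ 0, w ≤ 0, u w = 0}`, it suffices to
project onto the cross, which is the union of the two half-axes `{w = 0, u ≤ 0}` and
`{u = 0, w ≤ 0}`. Projecting `(a, b)` onto them costs `a² + b² - min(a, 0)²` and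
`a² + b² - min(b, 0)²` respectively, so the nearer one is the half-axis with the larger `min(·, 0)²`.
-/

lemma sq_sub_min_zero (a : ℝ) : (a - min a 0) ^ 2 = a ^ 2 - min a 0 ^ 2 := by
  rcases le_total a 0 with ha | ha
  · simp [min_eq_left ha]
  · simp [min_eq_right ha]

lemma sq_sub_sq_min_zero_le_sq_sub {a u : ℝ} (hu : u ≤ 0) : a ^ 2 - min a 0 ^ 2 ≤ (a - u) ^ 2 := by
  rcases le_total a 0 with ha | ha
  · rw [min_eq_left ha, sub_self]
    positivity
  · rw [min_eq_right ha]
    nlinarith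

lemma cross_projection_le {a b u w : ℝ} (hu : u ≤ 0) (hw : w ≤ 0) (huw : u * w = 0) :
    (a - if min b 0 ^ 2 ≤ min a 0 ^ 2 then min a 0 else 0) ^ 2 +
        (b - if min b 0 ^ 2 ≤ min a 0 ^ 2 then 0 else min b 0) ^ 2 ≤
      (a - u) ^ 2 + (b - w) ^ 2 := by
  have hau := sq_sub_sq_min_zero_le_sq_sub (a := a) hu
  have hbw := sq_sub_sq_min_zero_le_sq_sub (a := b) hw
  split_ifs with hc <;> rw [sq_sub_min_zero] <;>
    rcases mul_eq_zero.1 huw with rfl | rfl <;> simp only [sub_zero] at hau hbw ⊢ <;> linarith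

theorem complementarity_projection (p : ℕ) (a b : Fin p → ℝ)
    (u₀ w₀ : Fin p → ℝ)
    (hu₀ : ∀ i, u₀ i = if (min (b i) 0) ^ 2 ≤ (min (a i) 0) ^ 2 then min (a i) 0 else 0)
    (hw₀ : ∀ i, w₀ i = if (min (b i) 0) ^ 2 ≤ (min (a i) 0) ^ 2 then 0 else min (b i) 0) :
    ((∀ i, u₀ i ≤ 0) ∧ (∀ i, w₀ i ≤ 0) ∧ (∀ i, u₀ i * w₀ i = 0)) ∧
    ∀ u w : Fin p → ℝ, (∀ i, u i ≤ 0) → (∀ i, w i ≤ 0) → (∀ i, u i * w i = 0) →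
      ∑ i, ((a i - u₀ i) ^ 2 + (b i - w₀ i) ^ 2) ≤
        ∑ i, ((a i - u i) ^ 2 + (b i - w i) ^ 2) := by
  refine ⟨⟨fun i => ?_, fun i => ?_, fun i => ?_⟩,
    fun u w hu hw huw => Finset.sum_le_sum fun i _ => ?_⟩
  · rw [hu₀]; split_ifs <;> simp
  · rw [hw₀]; split_ifs <;> simp
  · rw [hu₀, hw₀]; split_ifs <;> simp
  · rw [hu₀, hw₀]
    exact cross_projection_le (hu i) (hw i) (huw i)
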